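/- Let G be a simple connected graph with E₀ edges and circuit rank r. For all n ≥ 0, Kf*(sⁿ(G)) = 8ⁿ·Kf*(G) + ((8ⁿ − 2ⁿ)/3)·(2r − 1)·E₀. -/

import Mathlib

/-- The subdivision graph `s(G)`: one new vertex inserted on each edge of `G`. -/
def subdivision {V : Type} (G : SimpleGraph V) : SimpleGraph (V ⊕ G.edgeSet) where
  Adj x y :=
    match x, y with
    | Sum.inl v, Sum.inr e => v ∈ (e : Sym2 V)
    | Sum.inr e, Sum.inl v => v ∈ (e : Sym2 V)
    | _, _ => False
  symm := by constructor; rintro (v | e) (w | f) h <;> exact h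
  loopless := by constructor; rintro (v | e) h <;> exact h

/-- The iterated subdivision `sⁿ(G)`, as a pair (vertex type, graph). -/
def iterSubdiv {V : Type} (G : SimpleGraph V) : ℕ → (W : Type) × SimpleGraph W
  | 0 => ⟨V, G⟩
  | n + 1 => ⟨_, subdivision (iterSubdiv G n).2⟩

instance iterSubdivFinite {V : Type} [Finite V] (G : SimpleGraph V) :
    ∀ n, Finite (iterSubdiv G n).1
  | 0 => ‹Finite V›
  | n + 1 => by
    haveI := iterSubdivFinite G n
    exact inferInstanceAs (Finite ((iterSubdiv G n).1 ⊕ (iterSubdiv G n).2.edgeSet))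

open Classical in
noncomputable def normAdj {V : Type} (G : SimpleGraph V) : Matrix V V ℝ :=
  Matrix.of fun i j =>
    if G.Adj i j then
      1 / Real.sqrt ((Nat.card (G.neighborSet i) : ℝ) * (Nat.card (G.neighborSet j) : ℝ))
    else 0

open Classical in
noncomputable def normLap {V : Type} (G : SimpleGraph V) : Matrix V V ℝ :=
  1 - normAdj G

theorem normAdj_isHermitian {V : Type} (G : SimpleGraph V) : (normAdj G).IsHermitian := by
  unfold Matrix.IsHermitian
  ext i j
  simp only [Matrix.conjTranspose_apply, normAdj, Matrix.of_apply, star_trivial]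
  rw [G.adj_comm]
  rcases em (G.Adj i j) with h | h <;> simp [h, mul_comm]

open Classical in
theorem normLap_isHermitian {V : Type} (G : SimpleGraph V) : (normLap G).IsHermitian :=
  Matrix.isHermitian_one.sub (normAdj_isHermitian G)

/-- `μ` is an eigenvalue of the matrix `M`. -/
def IsEigenvalueM {V : Type} [Finite V] (M : Matrix V V ℝ) (μ : ℝ) : Prop :=
  haveI := Fintype.ofFinite V
  haveI := Classical.decEq V
  Module.End.HasEigenvalue (Matrix.toLin' M) μ

/-- The multiplicity of `μ` as an eigenvalue of `M` (dimension of the eigenspace). -/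
noncomputable def eigMult {V : Type} [Finite V] (M : Matrix V V ℝ) (μ : ℝ) : ℕ :=
  haveI := Fintype.ofFinite V
  haveI := Classical.decEq V
  Module.finrank ℝ ↥(Module.End.eigenspace (Matrix.toLin' M) μ)

open Classical in
noncomputable def kemeny {V : Type} [Finite V] (G : SimpleGraph V) : ℝ :=
  haveI := Fintype.ofFinite V
  haveI := Classical.decEq V
  ∑ i : V, (if (normLap_isHermitian G).eigenvalues i = 0 then 0
            else ((normLap_isHermitian G).eigenvalues i)⁻¹)

/-- The multiplicative degree-Kirchhoff index `Kf* = 2|E| · Σ_{k≥2} 1/λ_k`. -/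
noncomputable def kirchhoffStar {V : Type} [Finite V] (G : SimpleGraph V) : ℝ :=
  2 * (Nat.card G.edgeSet : ℝ) * kemeny G

/-- The number of spanning trees of `G`. -/
noncomputable def numSpanningTrees {V : Type} (G : SimpleGraph V) : ℕ :=
  Nat.card {H : G.Subgraph // H.IsSpanning ∧ H.coe.IsTree}

/-!
The normalized adjacency matrix of `s(G)` is the block matrix `[[0, B], [Bᵀ, 0]]`, where `B` is
the normalized vertex–edge incidence matrix of `G`, and `2 B Bᵀ = 2 - L(G)` for the normalized
Laplacian `L(G)`. A Schur complement then gives, for `x ≠ 1`,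
`det (x - L(s(G))) (x - 1)^|V| = (x - 1)^|E| ∏ᵥ (x² - 2x + λᵥ/2)`, so the spectrum of
`L(s(G))` together with `|V|` copies of `1` is `|E|` copies of `1` together with the roots
`1 ± √(1 - λᵥ/2)`. Summing reciprocals, `K(s(G)) = 4 K(G) + 1/2 + |E| - |V|` for Kemeny's
constant `K`; the `1/2` comes from the root `2` paired with the single zero eigenvalue of a
connected graph. Hence `Kf*(s(G)) = 8 Kf*(G) + 2 (2r - 1) |E|`, and since subdivision doubles
`|E|` and preserves the circuit rank `r`, the closed form follows by induction on `n`.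
-/

open Matrix Polynomial SimpleGraph

theorem Multiset.eq_of_prod_map_sub_eq {R : Type*} [CommRing R] [IsDomain R] [Infinite R]
    {s t : Multiset R} {S : Set R} (hS : S.Finite)
    (h : ∀ x ∉ S, (s.map (x - ·)).prod = (t.map (x - ·)).prod) : s = t := by
  rw [← roots_multiset_prod_X_sub_C s, ← roots_multiset_prod_X_sub_C t]
  congr 1
  refine eq_of_infinite_eval_eq _ _ (hS.infinite_compl.mono fun x hx => ?_)
  simpa [eval_multiset_prod, Multiset.map_map, Function.comp_def] using h x hx

namespace Matrix.IsHermitian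

variable {n : Type*} [Fintype n] [DecidableEq n] {A : Matrix n n ℝ}

theorem det_smul_one_sub (hA : A.IsHermitian) (x : ℝ) :
    det (x • 1 - A) = ∏ i, (x - hA.eigenvalues i) := by
  have := congrArg (eval x) hA.charpoly_eq
  rw [eval_charpoly, eval_prod] at this
  simpa [smul_one_eq_diagonal, Matrix.scalar_apply] using this

theorem eigenvalues_le_of_posSemidef_smul_one_sub (hA : A.IsHermitian) {c : ℝ}
    (h : (c • 1 - A).PosSemidef) (i : n) : hA.eigenvalues i ≤ c := by
  have hmem : c - hA.eigenvalues i ∈ spectrum ℝ (c • 1 - A) := by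
    rw [← Algebra.algebraMap_eq_smul_one, ← spectrum.singleton_sub_eq]
    exact Set.sub_mem_sub rfl (hA.eigenvalues_mem_spectrum_real i)
  have := (posSemidef_iff_isHermitian_and_spectrum_nonneg.mp h).2 hmem
  simpa using this

theorem card_eigenvalues_eq_zero_add_rank (hA : A.IsHermitian) :
    Fintype.card {i // hA.eigenvalues i = 0} + A.rank = Fintype.card n := by
  rw [hA.rank_eq_card_non_zero_eigs, Fintype.card_subtype_compl,
    Nat.add_sub_cancel' (Fintype.card_subtype_le _)]

end Matrix.IsHermitian

theorem normLap_eq_one_sub {V : Type} [DecidableEq V] (G : SimpleGraph V) :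
    normLap G = 1 - normAdj G := by
  unfold normLap
  congr
  exact Subsingleton.elim _ _

-- The zero eigenvalue left out of `kemeny` contributes nothing here, as `0⁻¹ = 0`.
theorem kemeny_eq_sum_inv {V : Type} [Fintype V] [DecidableEq V] (G : SimpleGraph V) :
    kemeny G = ∑ i, ((normLap_isHermitian G).eigenvalues i)⁻¹ := by
  have h (x : ℝ) : (if x = 0 then 0 else x⁻¹) = x⁻¹ := by split_ifs with h <;> simp [h]
  simp only [kemeny, h]
  congr!

section NormalizedLaplacian

variable {V : Type} [Fintype V] (G : SimpleGraph V) [DecidableRel G.Adj]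

theorem normAdj_apply (u v : V) :
    normAdj G u v = if G.Adj u v then (√(G.degree u * G.degree v))⁻¹ else 0 := by
  simp only [normAdj, of_apply, one_div, Nat.card_eq_fintype_card, G.card_neighborSet_eq_degree]

variable [DecidableEq V] {G}

theorem normLap_eq_diagonal_mul_lapMatrix_mul_diagonal (hdeg : ∀ v, 0 < G.degree v) :
    normLap G = diagonal (fun v => (√(G.degree v))⁻¹) * G.lapMatrix ℝ *
      diagonal (fun v => (√(G.degree v))⁻¹) := by
  ext u v
  have hu : (0 : ℝ) < G.degree u := mod_cast hdeg u
  rw [normLap_eq_one_sub, Matrix.sub_apply, normAdj_apply, mul_diagonal, diagonal_mul]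
  by_cases huv : u = v
  · subst huv
    simp only [one_apply_eq, G.irrefl, if_false, SimpleGraph.lapMatrix,
      SimpleGraph.degMatrix, Matrix.sub_apply]
    field_simp
    simp [Real.sq_sqrt hu.le]
  · simp only [one_apply_ne huv, SimpleGraph.lapMatrix, SimpleGraph.degMatrix, Matrix.sub_apply,
      diagonal_apply_ne _ huv, SimpleGraph.adjMatrix_apply, Real.sqrt_mul hu.le]
    split_ifs <;> ring

theorem rank_normLap (hdeg : ∀ v, 0 < G.degree v) :
    (normLap G).rank = (G.lapMatrix ℝ).rank := by
  have hunit : IsUnit (diagonal fun v => (√(G.degree v : ℝ))⁻¹).det := by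
    simp [det_diagonal, Finset.prod_ne_zero_iff, (hdeg _).ne']
  rw [normLap_eq_diagonal_mul_lapMatrix_mul_diagonal hdeg,
    rank_mul_eq_left_of_isUnit_det _ _ hunit, rank_mul_eq_right_of_isUnit_det _ _ hunit]

theorem rank_lapMatrix_add_card_connectedComponent :
    (G.lapMatrix ℝ).rank + Fintype.card G.ConnectedComponent = Fintype.card V := by
  classical
  rw [G.card_connectedComponent_eq_finrank_ker_toLin'_lapMatrix, rank,
    ← Module.finrank_fintype_fun_eq_card (R := ℝ)]
  exact LinearMap.finrank_range_add_finrank_ker _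

theorem card_eigenvalues_normLap_eq_zero [Nontrivial V] (hG : G.Connected) :
    Fintype.card {i // (normLap_isHermitian G).eigenvalues i = 0} = 1 := by
  have hdeg (v : V) : 0 < G.degree v := hG.preconnected.degree_pos_of_nontrivial v
  have hcc : Fintype.card G.ConnectedComponent = 1 :=
    Fintype.card_eq_one_iff.2 ⟨G.connectedComponentMk hG.nonempty.some,
      fun _ => hG.preconnected.subsingleton_connectedComponent.elim _ _⟩
  have h1 := (normLap_isHermitian G).card_eigenvalues_eq_zero_add_rank
  have h2 := rank_lapMatrix_add_card_connectedComponent (G := G)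
  rw [rank_normLap hdeg] at h1
  omega

end NormalizedLaplacian

section Subdivision

variable {V : Type} (G : SimpleGraph V)

@[simp]
theorem subdivision_adj_inl_inr {v : V} {e : G.edgeSet} :
    (subdivision G).Adj (.inl v) (.inr e) ↔ v ∈ (e : Sym2 V) := Iff.rfl

@[simp]
theorem subdivision_adj_inr_inl {v : V} {e : G.edgeSet} :
    (subdivision G).Adj (.inr e) (.inl v) ↔ v ∈ (e : Sym2 V) := Iff.rfl

@[simp]
theorem subdivision_not_adj_inl_inl {v w : V} : ¬(subdivision G).Adj (.inl v) (.inl w) := id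

@[simp]
theorem subdivision_not_adj_inr_inr {e f : G.edgeSet} : ¬(subdivision G).Adj (.inr e) (.inr f) :=
  id

theorem subdivision_connected (hG : G.Connected) : (subdivision G).Connected := by
  have reach_inl (v w : V) : (subdivision G).Reachable (.inl v) (.inl w) := by
    obtain ⟨p⟩ := hG.preconnected v w
    induction p with
    | nil => rfl
    | @cons a b _ hab _ ih =>
      have ha : (subdivision G).Adj (.inl a) (.inr ⟨s(a, b), hab⟩) := Sym2.mem_mk_left a b
      have hb : (subdivision G).Adj (.inr ⟨s(a, b), hab⟩) (.inl b) := Sym2.mem_mk_right a b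
      exact ha.reachable.trans (hb.reachable.trans ih)
  have reach_some_inl : ∀ x, ∃ v, (subdivision G).Reachable x (.inl v)
    | .inl v => ⟨v, .rfl⟩
    | .inr e => ⟨_, (show (subdivision G).Adj (.inr e) (.inl (e : Sym2 V).out.1) from
        Sym2.out_fst_mem _).reachable⟩
  have : Nonempty (V ⊕ G.edgeSet) := ⟨.inl hG.nonempty.some⟩
  refine ⟨fun x y => ?_⟩
  obtain ⟨v, hv⟩ := reach_some_inl x
  obtain ⟨w, hw⟩ := reach_some_inl y
  exact hv.trans ((reach_inl v w).trans hw.symm)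

instance [DecidableEq V] : DecidableRel (subdivision G).Adj
  | .inl _, .inr _ => decidable_of_iff _ (subdivision_adj_inl_inr G).symm
  | .inr _, .inl _ => decidable_of_iff _ (subdivision_adj_inr_inl G).symm
  | .inl _, .inl _ => isFalse (subdivision_not_adj_inl_inl G)
  | .inr _, .inr _ => isFalse (subdivision_not_adj_inr_inr G)

theorem subdivision_neighborSet_inl (v : V) :
    (subdivision G).neighborSet (.inl v) = .inr '' {e : G.edgeSet | v ∈ (e : Sym2 V)} := by
  ext (w | e) <;> simp

theorem subdivision_neighborSet_inr (e : G.edgeSet) :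
    (subdivision G).neighborSet (.inr e) = .inl '' {v | v ∈ (e : Sym2 V)} := by
  ext (w | f) <;> simp

theorem subdivision_degree_inr (e : G.edgeSet)
    [Fintype ((subdivision G).neighborSet (.inr e))] :
    (subdivision G).degree (.inr e) = 2 := by
  rw [← card_neighborSet_eq_degree, ← Nat.card_eq_fintype_card, subdivision_neighborSet_inr,
    Nat.card_image_of_injective Sum.inl_injective]
  obtain ⟨e, he⟩ := e
  induction e using Sym2.ind with
  | _ a b =>
    have hab : {v | v ∈ s(a, b)} = {a, b} := by ext; simp
    rw [hab, Nat.card_coe_set_eq, Set.ncard_pair (G.ne_of_adj he)]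

theorem subdivision_degree_inl [Fintype V] [DecidableEq V] [DecidableRel G.Adj] (v : V)
    [Fintype ((subdivision G).neighborSet (.inl v))] :
    (subdivision G).degree (.inl v) = G.degree v := by
  rw [← card_neighborSet_eq_degree, ← G.card_incidenceSet_eq_degree,
    ← Nat.card_eq_fintype_card, ← Nat.card_eq_fintype_card, subdivision_neighborSet_inl,
    Nat.card_image_of_injective Sum.inr_injective]
  exact Nat.card_congr (Equiv.subtypeSubtypeEquivSubtypeInter (· ∈ G.edgeSet) (v ∈ ·))

theorem card_edgeSet_subdivision [Finite V] :
    Nat.card (subdivision G).edgeSet = 2 * Nat.card G.edgeSet := by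
  classical
  cases nonempty_fintype V
  have hsub := (subdivision G).sum_degrees_eq_twice_card_edges
  simp only [Fintype.sum_sum_type, subdivision_degree_inl, subdivision_degree_inr,
    G.sum_degrees_eq_twice_card_edges, Finset.sum_const, Finset.card_univ, smul_eq_mul] at hsub
  simp only [Nat.card_eq_fintype_card, ← edgeFinset_card] at hsub ⊢
  omega

end Subdivision

section Incidence

open Finset

variable {V : Type} [Fintype V] [DecidableEq V] (G : SimpleGraph V) [DecidableRel G.Adj]

noncomputable def normInc : Matrix V G.edgeSet ℝ :=
  of fun v e => if v ∈ (e : Sym2 V) then (√(2 * G.degree v))⁻¹ else 0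

theorem card_edges_mem_and_mem (u v : V) :
    #{e : G.edgeSet | u ∈ (e : Sym2 V) ∧ v ∈ (e : Sym2 V)} =
      if u = v then G.degree u else if G.Adj u v then 1 else 0 := by
  split_ifs with huv hadj
  · subst huv
    simp only [and_self]
    rw [← card_incidenceSet_eq_degree, ← Fintype.card_subtype]
    exact Fintype.card_congr (Equiv.subtypeSubtypeEquivSubtypeInter (· ∈ G.edgeSet) (u ∈ ·))
  · rw [card_eq_one]
    exact ⟨⟨s(u, v), hadj⟩, by ext e; simp [Sym2.mem_and_mem_iff huv, Subtype.ext_iff]⟩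
  · rw [card_eq_zero, filter_eq_empty_iff]
    rintro e - huv'
    exact hadj (by simpa [(Sym2.mem_and_mem_iff huv).1 huv'] using e.2)

theorem two_smul_normInc_mul_transpose (hdeg : ∀ v, 0 < G.degree v) :
    (2 : ℝ) • (normInc G * (normInc G)ᵀ) = (2 : ℝ) • 1 - normLap G := by
  ext u v
  have hterm (e : G.edgeSet) : normInc G u e * normInc G v e =
      if u ∈ (e : Sym2 V) ∧ v ∈ (e : Sym2 V) then
        (√(2 * G.degree u))⁻¹ * (√(2 * G.degree v))⁻¹ else 0 := by
    simp only [normInc, of_apply]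
    split_ifs <;> simp_all
  have hu : (0 : ℝ) < G.degree u := mod_cast hdeg u
  simp only [Matrix.smul_apply, mul_apply, transpose_apply, hterm, sum_ite, sum_const_zero,
    add_zero, sum_const, nsmul_eq_mul, card_edges_mem_and_mem, normLap_eq_one_sub,
    Matrix.sub_apply, normAdj_apply]
  by_cases huv : u = v
  · subst huv
    simp only [one_apply_eq, G.irrefl, if_true, if_false, smul_eq_mul, ← mul_inv,
      Real.mul_self_sqrt (by positivity : (0 : ℝ) ≤ 2 * G.degree u)]
    field_simp
    ring
  · simp only [one_apply_ne huv]
    split_ifs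
    · have h2 : √2 * √2 = 2 := Real.mul_self_sqrt zero_le_two
      have hu' : 0 < √(G.degree u : ℝ) := Real.sqrt_pos.2 hu
      have hv' : 0 < √(G.degree v : ℝ) := Real.sqrt_pos.2 (mod_cast hdeg v)
      simp only [Real.sqrt_mul zero_le_two, Real.sqrt_mul (Nat.cast_nonneg _), smul_eq_mul]
      field_simp
      linear_combination -h2
    · simp

end Incidence

theorem Matrix.det_fromBlocks_smul_one_mul_pow {m n K : Type*} [Fintype m] [DecidableEq m]
    [Fintype n] [DecidableEq n] [Field K] (B : Matrix m n K) (C : Matrix n m K) {a : K}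
    (ha : a ≠ 0) :
    det (fromBlocks (a • 1) B C (a • 1)) * a ^ Fintype.card m =
      a ^ Fintype.card n * det ((a * a) • 1 - B * C) := by
  let : Invertible (a • (1 : Matrix n n K)) :=
    invertibleOfRightInverse _ (a⁻¹ • 1) (by simp [smul_smul, ha])
  have hinv : ⅟(a • (1 : Matrix n n K)) = a⁻¹ • 1 :=
    invOf_eq_right_inv (by simp [smul_smul, ha])
  rw [det_fromBlocks₂₂, hinv, det_smul, det_one, mul_one, mul_assoc, mul_comm (det _),
    ← det_smul]
  congr 2
  simp [smul_sub, smul_smul, ha]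

section SubdivisionSpectrum

variable {V : Type} [Fintype V] [DecidableEq V] {G : SimpleGraph V} [DecidableRel G.Adj]

variable (G) in
theorem normAdj_subdivision :
    normAdj (subdivision G) = fromBlocks 0 (normInc G) (normInc G)ᵀ 0 := by
  ext (v | e) (w | f) <;>
    simp [normAdj_apply, normInc, subdivision_degree_inl, subdivision_degree_inr, mul_comm]

theorem eigenvalues_normLap_le_two (hdeg : ∀ v, 0 < G.degree v) (i : V) :
    (normLap_isHermitian G).eigenvalues i ≤ 2 := by
  refine (normLap_isHermitian G).eigenvalues_le_of_posSemidef_smul_one_sub ?_ i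
  rw [← two_smul_normInc_mul_transpose G hdeg, ← conjTranspose_eq_transpose_of_trivial]
  exact (posSemidef_self_mul_conjTranspose _).smul zero_le_two

theorem det_smul_one_sub_normLap_subdivision (hdeg : ∀ v, 0 < G.degree v) {x : ℝ}
    (hx : x ≠ 1) :
    det (x • 1 - normLap (subdivision G)) * (x - 1) ^ Fintype.card V =
      (x - 1) ^ Fintype.card G.edgeSet *
        ∏ v, (x ^ 2 - 2 * x + (normLap_isHermitian G).eigenvalues v / 2) := by
  have hblock : x • 1 - normLap (subdivision G) =
      fromBlocks ((x - 1) • 1) (normInc G) (normInc G)ᵀ ((x - 1) • 1) := by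
    rw [normLap_eq_one_sub, normAdj_subdivision]
    ext (v | e) (w | f) <;> simp [one_apply] <;> split_ifs <;> ring
  have hschur : ((x - 1) * (x - 1)) • 1 - normInc G * (normInc G)ᵀ =
      (-1 / 2 : ℝ) • ((2 - 2 * (x - 1) ^ 2) • 1 - normLap G) := by
    have hBB : normInc G * (normInc G)ᵀ = (1 / 2 : ℝ) • ((2 : ℝ) • 1 - normLap G) := by
      rw [← two_smul_normInc_mul_transpose G hdeg, smul_smul]
      norm_num
    rw [hBB]
    module
  rw [hblock, det_fromBlocks_smul_one_mul_pow _ _ (sub_ne_zero.2 hx), hschur, det_smul,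
    (normLap_isHermitian G).det_smul_one_sub, ← Finset.card_univ (α := V),
    Finset.pow_card_mul_prod]
  congr 1
  refine Finset.prod_congr rfl fun v _ => ?_
  ring

end SubdivisionSpectrum

section SubdivisionKemeny

open Finset

theorem inv_one_sub_sqrt_add_inv_one_add_sqrt {t : ℝ} (ht : t ≤ 2) :
    (1 - √(1 - t / 2))⁻¹ + (1 + √(1 - t / 2))⁻¹ =
      4 * t⁻¹ + if t = 0 then 1 / 2 else 0 := by
  have hs : √(1 - t / 2) ^ 2 = 1 - t / 2 := Real.sq_sqrt (by linarith)
  have hs0 : 0 ≤ √(1 - t / 2) := Real.sqrt_nonneg _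
  generalize √(1 - t / 2) = s at hs hs0 ⊢
  split_ifs with h
  · obtain rfl : s = 1 := by subst h; nlinarith
    norm_num [h]
  · have h1 : 1 - s ≠ 0 := fun h1 => h (by nlinarith)
    have h2 : 1 + s ≠ 0 := by linarith
    field_simp
    linear_combination 4 * hs

variable {V : Type} [Fintype V] [DecidableEq V] {G : SimpleGraph V} [DecidableRel G.Adj]

theorem eigenvalues_normLap_subdivision (hdeg : ∀ v, 0 < G.degree v) :
    univ.val.map (normLap_isHermitian (subdivision G)).eigenvalues +
        .replicate (Fintype.card V) 1 =
      .replicate (Fintype.card G.edgeSet) 1 +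
        (univ.val.map (fun v => 1 - √(1 - (normLap_isHermitian G).eigenvalues v / 2)) +
          univ.val.map (fun v => 1 + √(1 - (normLap_isHermitian G).eigenvalues v / 2))) := by
  refine Multiset.eq_of_prod_map_sub_eq (Set.finite_singleton 1) fun x hx => ?_
  simp only [Multiset.map_add, Multiset.prod_add, Multiset.map_replicate, Multiset.prod_replicate,
    Multiset.map_map, Function.comp_def, ← prod_eq_multiset_prod]
  rw [← (normLap_isHermitian _).det_smul_one_sub, det_smul_one_sub_normLap_subdivision hdeg hx,
    ← prod_mul_distrib]
  congr 1
  refine prod_congr rfl fun v _ => ?_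
  have hs : √(1 - (normLap_isHermitian G).eigenvalues v / 2) ^ 2 =
      1 - (normLap_isHermitian G).eigenvalues v / 2 :=
    Real.sq_sqrt (by linarith [eigenvalues_normLap_le_two hdeg v])
  linear_combination hs

theorem kemeny_subdivision [Nontrivial V] (hG : G.Connected) :
    kemeny (subdivision G) =
      4 * kemeny G + 1 / 2 + Fintype.card G.edgeSet - Fintype.card V := by
  have hdeg (v : V) : 0 < G.degree v := hG.preconnected.degree_pos_of_nontrivial v
  have h := congrArg (fun s => (s.map (·⁻¹)).sum) (eigenvalues_normLap_subdivision hdeg)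
  simp only [Multiset.map_add, Multiset.sum_add, Multiset.map_replicate, Multiset.sum_replicate,
    Multiset.map_map, Function.comp_def, ← sum_eq_multiset_sum, inv_one, nsmul_eq_mul, mul_one,
    ← sum_add_distrib, inv_one_sub_sqrt_add_inv_one_add_sqrt (eigenvalues_normLap_le_two hdeg _)]
    at h
  rw [sum_add_distrib, ← mul_sum, ← sum_filter, sum_const, ← Fintype.card_subtype,
    card_eigenvalues_normLap_eq_zero hG, one_smul] at h
  rw [kemeny_eq_sum_inv, kemeny_eq_sum_inv]
  linarith

end SubdivisionKemeny

noncomputable def circuitRank {V : Type} (G : SimpleGraph V) : ℤ :=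
  Nat.card G.edgeSet - Nat.card V + 1

theorem circuitRank_subdivision {V : Type} [Finite V] (G : SimpleGraph V) :
    circuitRank (subdivision G) = circuitRank G := by
  simp only [circuitRank, card_edgeSet_subdivision, Nat.card_sum]
  push_cast
  ring

theorem kirchhoffStar_subdivision {V : Type} [Finite V] {G : SimpleGraph V} (hG : G.Connected) :
    kirchhoffStar (subdivision G) =
      8 * kirchhoffStar G + 2 * (2 * circuitRank G - 1) * Nat.card G.edgeSet := by
  classical
  cases nonempty_fintype V
  by_cases hE : Nat.card G.edgeSet = 0
  · rw [kirchhoffStar, kirchhoffStar, card_edgeSet_subdivision, hE]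
    simp
  have : Nontrivial V := by
    obtain ⟨⟨e, he⟩⟩ := (Nat.card_ne_zero.1 hE).1
    induction e using Sym2.ind with
    | _ a b => exact ⟨a, b, G.ne_of_adj he⟩
  rw [kirchhoffStar, kirchhoffStar, kemeny_subdivision hG, card_edgeSet_subdivision, circuitRank]
  simp only [Nat.card_eq_fintype_card]
  push_cast
  ring

/-- `Kf*(sⁿ(G)) = 8ⁿ·Kf*(G) + ((8ⁿ − 2ⁿ)/3)(2r − 1)E₀` for all `n ≥ 0`. -/
theorem kirchhoffStar_closed_form {V : Type} [Finite V] (G : SimpleGraph V)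
    (hG : G.Connected) (r : ℤ)
    (hr : r = (Nat.card G.edgeSet : ℤ) - (Nat.card V : ℤ) + 1) (n : ℕ) :
    kirchhoffStar (iterSubdiv G n).2 =
      8 ^ n * kirchhoffStar G +
        ((8 ^ n - 2 ^ n : ℝ) / 3) * (2 * (r : ℝ) - 1) * (Nat.card G.edgeSet : ℝ) := by
  have connected (k : ℕ) : (iterSubdiv G k).2.Connected := by
    induction k with
    | zero => exact hG
    | succ k ih => exact subdivision_connected _ ih
  have card_edgeSet (k : ℕ) :
      Nat.card (iterSubdiv G k).2.edgeSet = 2 ^ k * Nat.card G.edgeSet := by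
    induction k with
    | zero => simp [iterSubdiv]
    | succ k ih => rw [iterSubdiv, card_edgeSet_subdivision, ih, pow_succ]; ring
  have circuitRank_eq (k : ℕ) : circuitRank (iterSubdiv G k).2 = r := by
    induction k with
    | zero => exact hr.symm
    | succ k ih => rw [iterSubdiv, circuitRank_subdivision, ih]
  induction n with
  | zero => simp [iterSubdiv]
  | succ n ih =>
    change kirchhoffStar (subdivision (iterSubdiv G n).2) = _
    rw [kirchhoffStar_subdivision (connected n), ih, circuitRank_eq n, card_edgeSet n]
    push_cast
    ring
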